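/- arXiv:2108.06739 — 3 statements merged into one kernel-verified Lean document; each statement's English description precedes it below -/
import Mathlib

section
/- Suppose k < b < 0 with b < -2 and k < b²/(b+2). Then the map f(x) = b + x - k/(1+e^x) has a period-2 orbit: there exist real numbers x₁ < x* < x₂ such that f(x₁) = x₂ and f(x₂) = x₁, where x* = ln(k/b - 1) is the fixed point of f. -/
/-!
The derivative of `f` at its fixed point `x*` is `1 + b - b² / k`, which is `< -1` exactly when
`k (b + 2) > b²`; so `f ∘ f` is expanding at `x*` and `f (f x) > x` just to the right of `x*`.
Far to the right `x + b < f x < x`, hence `f (f x) < x`, and the intermediate value theorem gives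
a fixed point `x₂ > x*` of `f ∘ f`. Since `f` moves every point to the right of `x*` leftwards,
`x₁ = f x₂` cannot lie to the right of `x*` too.
-/

open Real Set Filter Topology

lemma eventually_lt_apply_apply_of_one_lt_abs_deriv {f : ℝ → ℝ} {f' p : ℝ} (hfp : f p = p)
    (hf : HasDerivAt f f' p) (hf' : 1 < |f'|) : ∀ᶠ x in 𝓝[>] p, x < f (f x) := by
  have hcomp : HasDerivAt (fun x => f (f x) - x) (f' * f' - 1) p :=
    (HasDerivAt.comp p (by rwa [hfp]) hf).sub (hasDerivAt_id p)
  have hpos : 0 < f' * f' - 1 := by nlinarith [abs_mul_abs_self f', abs_nonneg f']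
  filter_upwards [nhdsGT_le_nhdsNE p (hcomp.tendsto_slope.eventually (eventually_gt_nhds hpos)),
    self_mem_nhdsWithin] with x hslope hpx
  exact sub_pos.mp (pos_of_slope_pos (f := fun x => f (f x) - x) hpx hslope (by simp [hfp]))

theorem exists_period_two_orbit_of_repelling {f : ℝ → ℝ} (hf : Continuous f) {p a c : ℝ}
    (hfp : f p = p) (hlt : ∀ y, p < y → f y < y) (hpa : p < a) (hac : a ≤ c)
    (ha : a < f (f a)) (hc : p < f c) :
    ∃ x₁ x₂, x₁ < p ∧ p < x₂ ∧ f x₁ = x₂ ∧ f x₂ = x₁ := by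
  have hcc : f (f c) < c := (hlt _ hc).trans (hlt c (hpa.trans_le hac))
  obtain ⟨x₂, ⟨hax₂, -⟩, hx₂⟩ : (0 : ℝ) ∈ (fun x => f (f x) - x) '' Icc a c :=
    intermediate_value_Icc' hac (by fun_prop) ⟨by linarith, by linarith⟩
  have hfix : f (f x₂) = x₂ := sub_eq_zero.mp hx₂
  have hpx₂ : p < x₂ := hpa.trans_le hax₂
  refine ⟨f x₂, x₂, ?_, hpx₂, hfix, rfl⟩
  by_contra! hx₁
  rcases hx₁.lt_or_eq with hx₁ | hx₁
  · linarith [hlt _ hx₁, hlt _ hpx₂]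
  · rw [← hx₁, hfp] at hfix
    exact hpx₂.ne hfix

noncomputable def sigmoidShift (b k x : ℝ) : ℝ := b + x - k / (1 + exp x)

section

variable {b k : ℝ}

lemma continuous_sigmoidShift : Continuous (sigmoidShift b k) :=
  (continuous_const.add continuous_id).sub
    (continuous_const.div (by fun_prop) fun y => (add_pos one_pos (exp_pos y)).ne')

lemma hasDerivAt_sigmoidShift (x : ℝ) :
    HasDerivAt (sigmoidShift b k) (1 + k * exp x / (1 + exp x) ^ 2) x := by
  have h : HasDerivAt (fun y => b + y - k / (1 + exp y))
      (1 - (0 * (1 + exp x) - k * exp x) / (1 + exp x) ^ 2) x :=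
    ((hasDerivAt_id' x).const_add b).sub
      ((hasDerivAt_const x k).div ((hasDerivAt_exp x).const_add 1) (by positivity))
  rwa [zero_mul, zero_sub, neg_div, sub_neg_eq_add] at h

lemma add_lt_sigmoidShift (hk : k < 0) (x : ℝ) : x + b < sigmoidShift b k x := by
  have : k / (1 + exp x) < 0 := div_neg_of_neg_of_pos hk (by positivity)
  unfold sigmoidShift
  linarith

lemma exp_log_div_sub_one (hkb : k < b) (hb : b < 0) : exp (log (k / b - 1)) = k / b - 1 :=
  exp_log (by rw [sub_pos, one_lt_div_of_neg hb]; exact hkb)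

lemma sigmoidShift_log (hkb : k < b) (hb : b < 0) :
    sigmoidShift b k (log (k / b - 1)) = log (k / b - 1) := by
  rw [sigmoidShift, exp_log_div_sub_one hkb hb, add_sub_cancel,
    div_div_cancel₀ (hkb.trans hb).ne]
  ring

lemma sigmoidShift_lt_self (hkb : k < b) (hb : b < 0) {y : ℝ} (hy : log (k / b - 1) < y) :
    sigmoidShift b k y < y := by
  have hey : k / b - 1 < exp y := by
    simpa [exp_log_div_sub_one hkb hb] using exp_lt_exp.mpr hy
  have hky : b * (1 + exp y) < k := by
    rw [div_sub_one hb.ne, div_lt_iff_of_neg hb] at hey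
    linarith
  have : b < k / (1 + exp y) := by rw [lt_div_iff₀ (by positivity)]; linarith
  unfold sigmoidShift
  linarith

lemma hasDerivAt_sigmoidShift_log (hkb : k < b) (hb : b < 0) :
    HasDerivAt (sigmoidShift b k) (1 + b - b ^ 2 / k) (log (k / b - 1)) := by
  convert hasDerivAt_sigmoidShift (log (k / b - 1)) using 1
  rw [exp_log_div_sub_one hkb hb, add_sub_cancel]
  have : k ≠ 0 := (hkb.trans hb).ne
  have : b ≠ 0 := hb.ne
  field_simp
  ring

end

/-- For k < b < 0 with b < -2 and k < b²/(b+2), the map f has a period-2 orbit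
straddling the fixed point x* = ln(k/b - 1). -/
theorem exists_period_two_orbit (b k : ℝ) (hkb : k < b) (hb : b < 0)
    (hb2 : b < -2) (hk : k < b ^ 2 / (b + 2)) :
    ∃ x₁ x₂ : ℝ, x₁ < Real.log (k / b - 1) ∧ Real.log (k / b - 1) < x₂ ∧
      b + x₁ - k / (1 + Real.exp x₁) = x₂ ∧
      b + x₂ - k / (1 + Real.exp x₂) = x₁ := by
  have hk0 : k < 0 := hkb.trans hb
  have hrepel : 1 < |1 + b - b ^ 2 / k| := by
    have hkey : b ^ 2 < k * (b + 2) := (lt_div_iff_of_neg (by linarith)).mp hk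
    have : b + 2 < b ^ 2 / k := (lt_div_iff_of_neg hk0).mpr (by linarith)
    exact lt_abs.mpr (Or.inr (by linarith))
  set p := log (k / b - 1)
  obtain ⟨a, ha, hpa⟩ := ((eventually_lt_apply_apply_of_one_lt_abs_deriv
    (sigmoidShift_log hkb hb) (hasDerivAt_sigmoidShift_log hkb hb) hrepel).and
    self_mem_nhdsWithin).exists
  have hc : p < sigmoidShift b k (max a (p - b)) := by
    linarith [add_lt_sigmoidShift (b := b) hk0 (max a (p - b)), le_max_right a (p - b)]
  exact exists_period_two_orbit_of_repelling continuous_sigmoidShift (sigmoidShift_log hkb hb)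
    (fun y => sigmoidShift_lt_self hkb hb) hpa (le_max_left a _) ha hc
end

section
/- For parameters satisfying k < b < 0, b < -2 and k < b²/(b+2), the map f(x) = b + x - k/(1+e^x) has at most one period-2 orbit: if {x₁, x₂} and {y₁, y₂} are two-cycles of f (with x₁ ≠ x₂, y₁ ≠ y₂), then {x₁, x₂} = {y₁, y₂}. -/
/-!
With `fermi x = 1 / (1 + exp x)` we have `x = log ((1 - fermi x) / fermi x)`. Adding the two
equations of a two-cycle gives `fermi x₁ + fermi x₂ = 2c` with `c = b / k`, so the cycle is
determined by the half-gap `d > 0` with `{fermi x₁, fermi x₂} = {c - d, c + d}`. Subtracting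
them shows that `d` is a zero of
`cycleEquation c k d = log ((c + d) / (c - d)) + log ((1 - c + d) / (1 - c - d)) + k d`.
Each logarithmic term has derivative `2a / (a² - d²)`, increasing in `d ≥ 0`, so
`cycleEquation c k` is strictly convex on `[0, min c (1 - c))`; as it vanishes at `0`, it has at
most one positive zero.
-/

open Real Set

noncomputable def fermi (x : ℝ) : ℝ := 1 / (1 + exp x)

lemma fermi_pos (x : ℝ) : 0 < fermi x := by
  unfold fermi; positivity

lemma fermi_lt_one (x : ℝ) : fermi x < 1 := by
  unfold fermi
  rw [div_lt_one (by positivity)]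
  linarith [exp_pos x]

lemma fermi_strictAnti : StrictAnti fermi := fun x y hxy =>
  one_div_lt_one_div_of_lt (by positivity) (by simpa using exp_lt_exp.2 hxy)

lemma fermi_injective : Function.Injective fermi := fermi_strictAnti.injective

lemma div_one_add_exp_eq_mul_fermi (k x : ℝ) : k / (1 + exp x) = k * fermi x :=
  (mul_one_div k _).symm

lemma log_one_sub_fermi_sub_log_fermi (x : ℝ) : log (1 - fermi x) - log (fermi x) = x := by
  have h : 1 - fermi x = exp x * fermi x := by
    unfold fermi; field_simp; ring
  rw [h, log_mul (exp_pos x).ne' (fermi_pos x).ne', log_exp]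
  ring

noncomputable def logQuotient (a u : ℝ) : ℝ := log (a + u) - log (a - u)

lemma hasDerivAt_logQuotient {a u : ℝ} (hp : 0 < a + u) (hm : 0 < a - u) :
    HasDerivAt (logQuotient a) (1 / (a + u) + 1 / (a - u)) u := by
  have h := (((hasDerivAt_id u).const_add a).log hp.ne').sub
    (((hasDerivAt_id u).const_sub a).log hm.ne')
  exact h.congr_deriv (by simp only [id]; ring)

lemma one_div_add_add_one_div_sub_lt {a u v : ℝ} (hu : 0 ≤ u) (huv : u < v) (hva : v < a) :
    1 / (a + u) + 1 / (a - u) < 1 / (a + v) + 1 / (a - v) := by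
  have hpair : ∀ w, 0 ≤ w → w < a → 1 / (a + w) + 1 / (a - w) = 2 * a / (a ^ 2 - w ^ 2) := by
    intro w hw hwa
    have : 0 < a - w := by linarith
    have : 0 < a + w := by linarith
    have : a ^ 2 - w ^ 2 ≠ 0 := by nlinarith
    field_simp
    ring
  rw [hpair u hu (huv.trans hva), hpair v (hu.trans huv.le) hva]
  exact div_lt_div_of_pos_left (by linarith) (by nlinarith) (by nlinarith)

lemma strictConvexOn_logQuotient (a : ℝ) : StrictConvexOn ℝ (Ico 0 a) (logQuotient a) := by
  have hderiv : ∀ u ∈ Ico 0 a, HasDerivAt (logQuotient a) (1 / (a + u) + 1 / (a - u)) u :=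
    fun u ⟨hu, hua⟩ => hasDerivAt_logQuotient (by linarith) (by linarith)
  refine StrictMonoOn.strictConvexOn_of_deriv (convex_Ico 0 a)
    (fun u hu => (hderiv u hu).continuousAt.continuousWithinAt) ?_
  rw [interior_Ico]
  intro u hu v hv huv
  rw [(hderiv u (Ioo_subset_Ico_self hu)).deriv, (hderiv v (Ioo_subset_Ico_self hv)).deriv]
  exact one_div_add_add_one_div_sub_lt hu.1.le huv hv.2

noncomputable def cycleEquation (c k d : ℝ) : ℝ := logQuotient c d + logQuotient (1 - c) d + k * d

lemma cycleEquation_zero (c k : ℝ) : cycleEquation c k 0 = 0 := by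
  simp [cycleEquation, logQuotient]

lemma strictConvexOn_cycleEquation (c k : ℝ) :
    StrictConvexOn ℝ (Ico 0 (min c (1 - c))) (cycleEquation c k) :=
  (((strictConvexOn_logQuotient c).subset (Ico_subset_Ico_right (min_le_left _ _))
    (convex_Ico _ _)).add ((strictConvexOn_logQuotient (1 - c)).subset
    (Ico_subset_Ico_right (min_le_right _ _)) (convex_Ico _ _))).add_convexOn
    ((LinearMap.mulLeft ℝ k).convexOn (convex_Ico _ _))

theorem StrictConvexOn.eq_of_apply_eq_apply {𝕜 : Type*} [Field 𝕜] [LinearOrder 𝕜]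
    [IsStrictOrderedRing 𝕜] {s : Set 𝕜} {f : 𝕜 → 𝕜} (hf : StrictConvexOn 𝕜 s f) {a x y : 𝕜}
    (ha : a ∈ s) (hx : x ∈ s) (hy : y ∈ s) (hxa : x ≠ a) (hya : y ≠ a)
    (hfx : f x = f a) (hfy : f y = f a) : x = y := by
  by_contra hxy
  rcases lt_or_gt_of_ne hxy with hlt | hlt
  · simpa [hfx, hfy] using hf.secant_strict_mono ha hx hy hxa hya hlt
  · simpa [hfx, hfy] using hf.secant_strict_mono ha hy hx hya hxa hlt

lemma exists_cycleEquation_eq_zero {b k x₁ x₂ : ℝ} (hk : k ≠ 0) (hx : x₁ ≠ x₂)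
    (h₁ : b + x₁ - k * fermi x₁ = x₂) (h₂ : b + x₂ - k * fermi x₂ = x₁) :
    ∃ d ∈ Ioo 0 (min (b / k) (1 - b / k)), cycleEquation (b / k) k d = 0 ∧
      fermi '' {x₁, x₂} = {b / k - d, b / k + d} := by
  wlog hlt : fermi x₁ < fermi x₂ generalizing x₁ x₂
  · have hgt : fermi x₂ < fermi x₁ :=
      lt_of_le_of_ne (not_lt.1 hlt) (fermi_injective.ne hx.symm)
    obtain ⟨d, hd, hzero, himage⟩ := this hx.symm h₂ h₁ hgt
    exact ⟨d, hd, hzero, by rwa [pair_comm]⟩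
  set d := (fermi x₂ - fermi x₁) / 2 with hd
  have hsum : fermi x₁ + fermi x₂ = 2 * (b / k) := by
    field_simp
    linarith
  have hdiff : 2 * (x₁ - x₂) = k * (fermi x₁ - fermi x₂) := by linarith
  have hA₁ : b / k - d = fermi x₁ := by linarith
  have hA₂ : b / k + d = fermi x₂ := by linarith
  refine ⟨d, ⟨by linarith [hd], lt_min ?_ ?_⟩, ?_, by rw [image_pair, hA₁, hA₂]⟩
  · linarith [fermi_pos x₁]
  · linarith [fermi_lt_one x₂]
  · have hB₁ : 1 - b / k + d = 1 - fermi x₁ := by linarith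
    have hB₂ : 1 - b / k - d = 1 - fermi x₂ := by linarith
    unfold cycleEquation logQuotient
    rw [hA₁, hA₂, hB₁, hB₂]
    linear_combination log_one_sub_fermi_sub_log_fermi x₁ - log_one_sub_fermi_sub_log_fermi x₂
      + hdiff / 2 + k * hd

theorem period_two_unique_general (b k : ℝ) (hkb : k < b) (hb : b < 0)
    (x₁ x₂ y₁ y₂ : ℝ)
    (hx : x₁ ≠ x₂) (hy : y₁ ≠ y₂)
    (hfx1 : b + x₁ - k / (1 + Real.exp x₁) = x₂)
    (hfx2 : b + x₂ - k / (1 + Real.exp x₂) = x₁)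
    (hfy1 : b + y₁ - k / (1 + Real.exp y₁) = y₂)
    (hfy2 : b + y₂ - k / (1 + Real.exp y₂) = y₁) :
    ({x₁, x₂} : Set ℝ) = {y₁, y₂} := by
  rw [div_one_add_exp_eq_mul_fermi] at hfx1 hfx2 hfy1 hfy2
  have hk : k ≠ 0 := (hkb.trans hb).ne
  obtain ⟨d, hd, hgd, hxd⟩ := exists_cycleEquation_eq_zero hk hx hfx1 hfx2
  obtain ⟨e, he, hge, hye⟩ := exists_cycleEquation_eq_zero hk hy hfy1 hfy2
  have h0 : (0 : ℝ) ∈ Ico 0 (min (b / k) (1 - b / k)) := ⟨le_rfl, hd.1.trans hd.2⟩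
  have hde : d = e := (strictConvexOn_cycleEquation (b / k) k).eq_of_apply_eq_apply h0
    (Ioo_subset_Ico_self hd) (Ioo_subset_Ico_self he) hd.1.ne' he.1.ne'
    (by rw [hgd, cycleEquation_zero]) (by rw [hge, cycleEquation_zero])
  subst hde
  exact fermi_injective.image_injective (hxd.trans hye.symm)

/-- For k < b < 0, b < -2, k < b²/(b+2), the map f has at most one period-2
orbit. -/
theorem period_two_unique (b k : ℝ) (hkb : k < b) (hb : b < 0)
    (hb2 : b < -2) (hk : k < b ^ 2 / (b + 2)) (x₁ x₂ y₁ y₂ : ℝ)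
    (hx : x₁ ≠ x₂) (hy : y₁ ≠ y₂)
    (hfx1 : b + x₁ - k / (1 + Real.exp x₁) = x₂)
    (hfx2 : b + x₂ - k / (1 + Real.exp x₂) = x₁)
    (hfy1 : b + y₁ - k / (1 + Real.exp y₁) = y₂)
    (hfy2 : b + y₂ - k / (1 + Real.exp y₂) = y₁) :
    ({x₁, x₂} : Set ℝ) = {y₁, y₂} :=
  period_two_unique_general b k hkb hb x₁ x₂ y₁ y₂ hx hy hfx1 hfx2 hfy1 hfy2
end

section
/- For the map f(x) = b + x - k/(1+e^x) with k < -4, the Schwarzian derivative Sf(x) = f'''(x)/f'(x) - (3/2)(f''(x)/f'(x))² is strictly negative at every point where f'(x) ≠ 0; explicitly, Sf(x) = k e^x (2(e^x - 1)² - (k+4) e^x) / (2((e^x+1)² + k e^x)²) < 0. -/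
/-!
With u = eˣ every derivative of f is a rational function of u:
f' = ((1 + u)² + k u) / (1 + u)², f'' = k u (1 - u) / (1 + u)³ and
f''' = k u (1 - 4u + u²) / (1 + u)⁴, so the formula for Sf is an identity of rational functions.
Its denominator is a nonzero square, while for k < -4 both k u < 0 and
2(u - 1)² - (k + 4) u > 0, so the numerator is negative.
-/

open Real

lemma hasDerivAt_one_add_exp (x : ℝ) : HasDerivAt (fun y => 1 + exp y) (exp x) x :=
  (hasDerivAt_exp x).const_add 1

lemma one_add_exp_ne_zero (x : ℝ) : 1 + exp x ≠ 0 := by positivity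

lemma deriv_add_id_sub_div_one_add_exp (b k : ℝ) :
    deriv (fun y => b + y - k / (1 + exp y)) = fun x => 1 + k * exp x / (1 + exp x) ^ 2 := by
  ext x
  refine (((hasDerivAt_id x).const_add b).sub
    ((hasDerivAt_const x k).fun_div (hasDerivAt_one_add_exp x) (one_add_exp_ne_zero x))).deriv.trans ?_
  field_simp
  ring

lemma deriv_one_add_mul_exp_div_sq (k : ℝ) :
    deriv (fun y => 1 + k * exp y / (1 + exp y) ^ 2) =
      fun x => k * exp x * (1 - exp x) / (1 + exp x) ^ 3 := by
  ext x
  refine ((((hasDerivAt_exp x).const_mul k).fun_div ((hasDerivAt_one_add_exp x).fun_pow 2)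
    (pow_ne_zero 2 (one_add_exp_ne_zero x))).const_add 1).deriv.trans ?_
  field_simp
  ring

lemma deriv_mul_exp_mul_one_sub_exp_div_cube (k : ℝ) :
    deriv (fun y => k * exp y * (1 - exp y) / (1 + exp y) ^ 3) =
      fun x => k * exp x * (1 - 4 * exp x + exp x ^ 2) / (1 + exp x) ^ 4 := by
  ext x
  refine ((((hasDerivAt_exp x).const_mul k).fun_mul ((hasDerivAt_exp x).const_sub 1)).fun_div
    ((hasDerivAt_one_add_exp x).fun_pow 3) (pow_ne_zero 3 (one_add_exp_ne_zero x))).deriv.trans ?_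
  field_simp
  ring

lemma mul_mul_two_mul_sq_sub_add_four_mul_neg {k u : ℝ} (hk : k < -4) (hu : 0 < u) :
    k * u * (2 * (u - 1) ^ 2 - (k + 4) * u) < 0 := by
  have hfactor : 0 < 2 * (u - 1) ^ 2 - (k + 4) * u := by nlinarith [sq_nonneg (u - 1)]
  exact mul_neg_of_neg_of_pos (mul_neg_of_neg_of_pos (by linarith) hu) hfactor

/-- For k < -4, the Schwarzian derivative of f is strictly negative at every
point where f'(x) ≠ 0, with the explicit formula
Sf(x) = k e^x (2(e^x-1)² - (k+4)e^x) / (2((e^x+1)² + k e^x)²). -/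
theorem schwarzian_negative (b k : ℝ) (hk : k < -4) :
    ∀ x : ℝ, deriv (fun y : ℝ => b + y - k / (1 + Real.exp y)) x ≠ 0 →
      (deriv (deriv (deriv (fun y : ℝ => b + y - k / (1 + Real.exp y)))) x /
          deriv (fun y : ℝ => b + y - k / (1 + Real.exp y)) x -
        (3 / 2) *
          (deriv (deriv (fun y : ℝ => b + y - k / (1 + Real.exp y))) x /
            deriv (fun y : ℝ => b + y - k / (1 + Real.exp y)) x) ^ 2 =
        k * Real.exp x * (2 * (Real.exp x - 1) ^ 2 - (k + 4) * Real.exp x) /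
          (2 * ((Real.exp x + 1) ^ 2 + k * Real.exp x) ^ 2)) ∧
      k * Real.exp x * (2 * (Real.exp x - 1) ^ 2 - (k + 4) * Real.exp x) /
          (2 * ((Real.exp x + 1) ^ 2 + k * Real.exp x) ^ 2) < 0 := by
  intro x hf'
  rw [deriv_add_id_sub_div_one_add_exp, deriv_one_add_mul_exp_div_sq,
    deriv_mul_exp_mul_one_sub_exp_div_cube] at *
  have hden : (1 + exp x) ^ 2 + k * exp x ≠ 0 := by
    contrapose! hf'
    field_simp
    linear_combination hf'
  rw [add_comm (exp x) 1]
  refine ⟨by field_simp; ring, div_neg_of_neg_of_pos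
    (mul_mul_two_mul_sq_sub_add_four_mul_neg hk (exp_pos x)) (mul_pos two_pos (sq_pos_of_ne_zero hden))⟩
end
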